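/- The number of signed permutations of [n] with exactly i+1 cyclic descents equals 2^n times the number of (unsigned) permutations of [n] with exactly i descents, for all 0 ≤ i ≤ n-1. Equivalently, B_n^{(c)}(t) = 2^n A_n(t). -/

import Mathlib

open scoped Classical

noncomputable section

/-- The value of `π` at the 1-based position `i`, with the convention
`π(0) = π(n+1) = 0` and values in `{1, …, n}`. -/
def pval {n : ℕ} (π : Equiv.Perm (Fin n)) (i : ℕ) : ℕ :=
  if h : 1 ≤ i ∧ i ≤ n then ((π ⟨i - 1, by omega⟩ : Fin n) : ℕ) + 1 else 0

/-- The descent set of `π`: positions `1 ≤ s ≤ n-1` with `π(s) > π(s+1)`. -/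
def desSet {n : ℕ} (π : Equiv.Perm (Fin n)) : Finset ℕ :=
  (Finset.Ico 1 n).filter fun s => pval π (s + 1) < pval π s

/-- The descent number of `π`. -/
def des {n : ℕ} (π : Equiv.Perm (Fin n)) : ℕ := (desSet π).card

/-- `i` is a peak of `π` (with the convention `π(0) = π(n+1) = 0`). -/
def isPk {n : ℕ} (π : Equiv.Perm (Fin n)) (i : ℕ) : Prop :=
  pval π (i - 1) < pval π i ∧ pval π (i + 1) < pval π i

/-- Interior peak set: peaks `i` with `1 < i < n`. -/
def intPk {n : ℕ} (π : Equiv.Perm (Fin n)) : Finset ℕ :=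
  (Finset.Ioo 1 n).filter (isPk π)

/-- Left peak set: peaks `i` with `1 ≤ i < n`. -/
def leftPk {n : ℕ} (π : Equiv.Perm (Fin n)) : Finset ℕ :=
  (Finset.Ico 1 n).filter (isPk π)

/-- Right peak set: peaks `i` with `1 < i ≤ n`. -/
def rightPk {n : ℕ} (π : Equiv.Perm (Fin n)) : Finset ℕ :=
  (Finset.Ioc 1 n).filter (isPk π)

/-- Exterior peak set: peaks `i` with `1 ≤ i ≤ n`. -/
def extPk {n : ℕ} (π : Equiv.Perm (Fin n)) : Finset ℕ :=
  (Finset.Icc 1 n).filter (isPk π)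



/-- A signed permutation of `{±1, …, ±n}`: a bijection `π : ℤ → ℤ` with
`π(-i) = -π(i)` that fixes every integer of absolute value greater than `n`. -/
def IsSignedPerm (n : ℕ) (π : Equiv.Perm ℤ) : Prop :=
  (∀ i : ℤ, π (-i) = -π i) ∧ ∀ i : ℤ, (n : ℤ) < |i| → π i = i

/-- The hyperoctahedral group `B_n`, realized as a subgroup of `Equiv.Perm ℤ`. -/
def Bgroup (n : ℕ) : Subgroup (Equiv.Perm ℤ) where
  carrier := {π | IsSignedPerm n π}
  one_mem' := ⟨fun i => by simp, fun i _ => rfl⟩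
  mul_mem' := fun {a b} ha hb =>
    ⟨fun i => by simp only [Equiv.Perm.mul_apply, hb.1 i, ha.1 (b i)],
     fun i hi => by simp only [Equiv.Perm.mul_apply, hb.2 i hi, ha.2 i hi]⟩
  inv_mem' := fun {a} ha =>
    ⟨fun i => by rw [Equiv.Perm.inv_eq_iff_eq, ha.1, Equiv.Perm.coe_inv, Equiv.apply_symm_apply],
     fun i hi => by rw [Equiv.Perm.inv_eq_iff_eq]; exact (ha.2 i hi).symm⟩

/-- The type B descent set of `π`: positions `0 ≤ s ≤ n-1` with `π(s) > π(s+1)`. -/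
def desSetB (n : ℕ) (π : Equiv.Perm ℤ) : Finset ℕ :=
  (Finset.range n).filter fun s => π ((s : ℤ) + 1) < π (s : ℤ)

/-- The type B descent number. -/
def desB (n : ℕ) (π : Equiv.Perm ℤ) : ℕ := (desSetB n π).card

/-- The type B cyclic descent number: `des_B(π)` plus one more if `π(n) > 0`. -/
def cdesB (n : ℕ) (π : Equiv.Perm ℤ) : ℕ :=
  desB n π + (if 0 < π (n : ℤ) then 1 else 0)

/-!
Write `π ∈ B_n` as `j + 1 ↦ ±(σ j + 1)` with `σ ∈ S_n`, the sign being attached to the value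
`σ j` by a vector `ε`. For fixed `ε` the word `0, π(1), …, π(n)` is an arrangement of the fixed set
`{0} ∪ {±(v + 1)}` beginning with `0`, and `cdes_B π` is the number of its cyclic descents (the
descent `π(n) > π(0) = 0` closes the cycle). Rotating this cyclic word so that its maximum comes
first and deleting the maximum turns the cyclic descents into the ordinary descents plus the one
right after the maximum, and loses no information because the first letter `0` is known. So for
each of the `2^n` sign vectors `ε` we get a bijection `σ ↦ τ` of `S_n` with
`cdes_B π = des τ + 1`.
-/

open Finset Equiv

section CyclicDescents

variable {α β : Type*} [LinearOrder α] [LinearOrder β] {n : ℕ}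

def cdes (w : Fin (n + 1) → α) : ℕ := #{i | w (i + 1) < w i}

def linDes (w : Fin (n + 1) → α) : ℕ := #{k : Fin n | w k.succ < w k.castSucc}

lemma cdes_comp_addRight (w : Fin (n + 1) → α) (p : Fin (n + 1)) :
    cdes (fun i => w (i + p)) = cdes w := by
  refine card_equiv (Equiv.addRight p) fun i => ?_
  simp only [mem_filter, mem_univ, true_and, Equiv.coe_addRight, add_right_comm]

lemma cdes_comp_strictMono {f : α → β} (hf : StrictMono f) (w : Fin (n + 1) → α) :
    cdes (f ∘ w) = cdes w := by
  simp only [cdes, Function.comp_apply, hf.lt_iff_lt]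

lemma linDes_comp_strictMono {f : α → β} (hf : StrictMono f) (w : Fin (n + 1) → α) :
    linDes (f ∘ w) = linDes w := by
  simp only [linDes, Function.comp_apply, hf.lt_iff_lt]

lemma cdes_eq_linDes_tail_add_one (w : Fin (n + 2) → α) (hw : ∀ i ≠ 0, w i < w 0) :
    cdes w = linDes (Fin.tail w) + 1 := by
  have hfirst : w (0 + 1) < w 0 := hw _ (by simp)
  have hlast : ¬ w ((Fin.last n).succ + 1) < w (Fin.last n).succ := by
    rw [Fin.succ_last, Fin.last_add_one]
    exact (hw _ (Fin.succ_ne_zero (Fin.last n))).not_gt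
  rw [cdes, linDes, card_filter, card_filter, Fin.sum_univ_succ, Fin.sum_univ_castSucc,
    if_pos hfirst, if_neg hlast, add_zero, add_comm]
  simp only [Fin.tail, Fin.succ_castSucc, Fin.coeSucc_eq_succ]
  rfl

lemma pval_natCast_succ {m : ℕ} (σ : Perm (Fin m)) (j : Fin m) :
    pval σ ((j : ℕ) + 1) = (σ j : ℕ) + 1 := by
  simp [pval, j.isLt]

lemma des_eq_linDes {m : ℕ} (σ : Perm (Fin (m + 1))) : des σ = linDes σ := by
  rw [des, desSet, linDes, card_filter, card_filter, sum_Ico_eq_sum_range,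
    ← Fin.sum_univ_eq_sum_range]
  refine Fintype.sum_congr _ _ fun k => ?_
  have h1 := pval_natCast_succ σ k.castSucc
  have h2 := pval_natCast_succ σ k.succ
  simp only [Fin.val_castSucc, Fin.val_succ] at h1 h2
  simp only [add_comm 1, h1, h2, Nat.add_lt_add_iff_right, Fin.val_fin_lt]

end CyclicDescents

section Linearize

variable {n : ℕ}

def rotateToTop (u : Perm (Fin (n + 1))) : Perm (Fin (n + 1)) :=
  (Equiv.addRight (u⁻¹ (Fin.last n))).trans u

lemma rotateToTop_apply (u : Perm (Fin (n + 1))) (i : Fin (n + 1)) :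
    rotateToTop u i = u (i + u⁻¹ (Fin.last n)) := rfl

lemma rotateToTop_apply_zero (u : Perm (Fin (n + 1))) : rotateToTop u 0 = Fin.last n := by
  simp [rotateToTop_apply]

lemma cdes_rotateToTop (u : Perm (Fin (n + 1))) : cdes (rotateToTop u) = cdes u :=
  cdes_comp_addRight u _

lemma eq_of_rotateToTop_eq {u u' : Perm (Fin (n + 1))} (h0 : u 0 = u' 0)
    (h : rotateToTop u = rotateToTop u') : u = u' := by
  have hp : u⁻¹ (Fin.last n) = u'⁻¹ (Fin.last n) := by
    have : rotateToTop u (-u⁻¹ (Fin.last n)) = rotateToTop u (-u'⁻¹ (Fin.last n)) := by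
      rw [rotateToTop_apply, neg_add_cancel, h0, h, rotateToTop_apply, neg_add_cancel]
    exact neg_inj.mp ((rotateToTop u).injective this)
  ext i : 1
  simpa [rotateToTop_apply, hp] using congrArg (· (i - u⁻¹ (Fin.last n))) h

def dropTop (v : Perm (Fin (n + 1))) (hv : v 0 = Fin.last n) : Perm (Fin n) where
  toFun j := (v j.succ).castPred fun h => Fin.succ_ne_zero j (v.injective (h.trans hv.symm))
  invFun k := (v⁻¹ k.castSucc).pred fun h => Fin.castSucc_ne_last k <| by
    rw [← hv, ← h]; simp
  left_inv j := by simp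
  right_inv k := by simp

lemma castSucc_dropTop (v : Perm (Fin (n + 1))) (hv : v 0 = Fin.last n) (j : Fin n) :
    (dropTop v hv j).castSucc = v j.succ :=
  Fin.castSucc_castPred _ fun h => Fin.succ_ne_zero j (v.injective (h.trans hv.symm))

lemma eq_of_dropTop_eq {v v' : Perm (Fin (n + 1))} (hv : v 0 = Fin.last n)
    (hv' : v' 0 = Fin.last n) (h : dropTop v hv = dropTop v' hv') : v = v' := by
  ext i : 1
  induction i using Fin.cases with
  | zero => rw [hv, hv']
  | succ j => rw [← castSucc_dropTop v hv, ← castSucc_dropTop v' hv', h]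

lemma cdes_eq_des_dropTop_add_one (v : Perm (Fin (n + 2))) (hv : v 0 = Fin.last (n + 1)) :
    cdes v = des (dropTop v hv) + 1 := by
  have htop : ∀ i ≠ 0, v i < v 0 := fun i hi => hv ▸
    (Fin.le_last _).lt_of_ne fun h => hi (v.injective (h.trans hv.symm))
  rw [des_eq_linDes, ← linDes_comp_strictMono Fin.strictMono_castSucc,
    cdes_eq_linDes_tail_add_one _ htop]
  congr 2

def linearize (u : Perm (Fin (n + 1))) : Perm (Fin n) :=
  dropTop (rotateToTop u) (rotateToTop_apply_zero u)

lemma cdes_eq_des_linearize_add_one (u : Perm (Fin (n + 2))) :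
    cdes u = des (linearize u) + 1 := by
  rw [← cdes_rotateToTop, linearize, cdes_eq_des_dropTop_add_one]

lemma eq_of_linearize_eq {u u' : Perm (Fin (n + 1))} (h0 : u 0 = u' 0)
    (h : linearize u = linearize u') : u = u' :=
  eq_of_rotateToTop_eq h0 (eq_of_dropTop_eq _ _ h)

end Linearize

section SignedPerm

variable {n : ℕ}

def signedVal (b : Bool) (v : Fin n) : ℤ := if b then -((v : ℕ) + 1) else (v : ℕ) + 1

lemma natAbs_signedVal (b : Bool) (v : Fin n) : (signedVal b v).natAbs = v + 1 := by
  unfold signedVal; split <;> omega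

lemma signedVal_not (b : Bool) (v : Fin n) : signedVal (!b) v = -signedVal b v := by
  cases b <;> simp [signedVal]

lemma signedVal_injective : Function.Injective fun x : Bool × Fin n => signedVal x.1 x.2 := by
  rintro ⟨b, v⟩ ⟨b', v'⟩ h
  have habs := congrArg Int.natAbs h
  simp only [natAbs_signedVal] at habs
  have hv : v = v' := Fin.ext (by omega)
  subst hv
  cases b <;> cases b' <;> simp_all [signedVal] <;> omega

def signedPosEquiv : Bool × Fin n ≃ {i : ℤ // i ≠ 0 ∧ i.natAbs ≤ n} :=
  Equiv.ofBijective (fun x => ⟨signedVal x.1 x.2, by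
      have := natAbs_signedVal x.1 x.2; have := x.2.isLt; omega⟩)
    ⟨fun x y h => signedVal_injective (congrArg Subtype.val h), fun ⟨i, hi⟩ => by
      refine ⟨(decide (i < 0), ⟨i.natAbs - 1, by omega⟩), Subtype.ext ?_⟩
      by_cases h : i < 0 <;> simp [signedVal, h] <;> omega⟩

lemma coe_signedPosEquiv (x : Bool × Fin n) : (signedPosEquiv x : ℤ) = signedVal x.1 x.2 := rfl

lemma exists_eq_signedVal {i : ℤ} (h0 : i ≠ 0) (hi : i.natAbs ≤ n) :
    ∃ (b : Bool) (v : Fin n), i = signedVal b v := by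
  obtain ⟨⟨b, v⟩, h⟩ := signedPosEquiv.surjective ⟨i, h0, hi⟩
  exact ⟨b, v, (congrArg Subtype.val h).symm⟩

/-- The signed permutation `j + 1 ↦ ±(σ j + 1)`, where the sign is negative iff `ε (σ j)`. -/
def toSigned (ε : Fin n → Bool) (σ : Perm (Fin n)) : Perm ℤ :=
  Perm.extendDomain
    { toFun x := (x.1 ^^ ε (σ x.2), σ x.2)
      invFun x := (x.1 ^^ ε x.2, σ.symm x.2)
      left_inv := by rintro ⟨b, j⟩; simp
      right_inv := by rintro ⟨b, j⟩; simp }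
    signedPosEquiv

lemma toSigned_signedVal (ε : Fin n → Bool) (σ : Perm (Fin n)) (b : Bool) (j : Fin n) :
    toSigned ε σ (signedVal b j) = signedVal (b ^^ ε (σ j)) (σ j) :=
  Perm.extendDomain_apply_image _ signedPosEquiv (b, j)

lemma toSigned_natCast_succ (ε : Fin n → Bool) (σ : Perm (Fin n)) (j : Fin n) :
    toSigned ε σ ((j : ℕ) + 1) = signedVal (ε (σ j)) (σ j) := by
  have := toSigned_signedVal ε σ false j
  rwa [Bool.false_xor] at this

lemma toSigned_of_not_mem (ε : Fin n → Bool) (σ : Perm (Fin n)) {i : ℤ}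
    (h : ¬(i ≠ 0 ∧ i.natAbs ≤ n)) : toSigned ε σ i = i :=
  Perm.extendDomain_apply_not_subtype _ signedPosEquiv h

lemma toSigned_zero (ε : Fin n → Bool) (σ : Perm (Fin n)) : toSigned ε σ 0 = 0 :=
  toSigned_of_not_mem ε σ (by simp)

lemma toSigned_mem (ε : Fin n → Bool) (σ : Perm (Fin n)) : toSigned ε σ ∈ Bgroup n := by
  refine ⟨fun i => ?_, fun i hi => toSigned_of_not_mem ε σ ?_⟩
  · by_cases hi : i ≠ 0 ∧ i.natAbs ≤ n
    · obtain ⟨b, j, rfl⟩ := exists_eq_signedVal hi.1 hi.2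
      rw [← signedVal_not, toSigned_signedVal, toSigned_signedVal, Bool.not_xor, signedVal_not]
    · rw [toSigned_of_not_mem ε σ hi, toSigned_of_not_mem ε σ (by omega)]
  · rw [Int.abs_eq_natAbs] at hi
    omega

lemma toSigned_injective :
    Function.Injective fun x : (Fin n → Bool) × Perm (Fin n) => toSigned x.1 x.2 := by
  rintro ⟨ε, σ⟩ ⟨ε', σ'⟩ h
  have hval (j : Fin n) : (ε (σ j), σ j) = (ε' (σ' j), σ' j) := signedVal_injective <| by
    simpa only [toSigned_natCast_succ] using congrArg (· ((j : ℕ) + 1)) h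
  have hσ : σ = σ' := Equiv.ext fun j => congrArg Prod.snd (hval j)
  subst hσ
  have hε : ε = ε' := funext fun v => by simpa using congrArg Prod.fst (hval (σ.symm v))
  rw [hε]

namespace IsSignedPerm

variable {π π' : Perm ℤ}

lemma apply_zero (hπ : IsSignedPerm n π) : π 0 = 0 := by
  have := hπ.1 0
  rw [neg_zero] at this
  omega

lemma apply_ne_zero (hπ : IsSignedPerm n π) {i : ℤ} (hi : i ≠ 0) : π i ≠ 0 :=
  fun h => hi (π.injective (h.trans hπ.apply_zero.symm))

lemma natAbs_apply_le (hπ : IsSignedPerm n π) {i : ℤ} (hi : i.natAbs ≤ n) :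
    (π i).natAbs ≤ n := by
  by_contra h
  have := π.injective (hπ.2 (π i) (by rw [Int.abs_eq_natAbs]; omega))
  omega

lemma eq_of_forall_natCast_succ (hπ : IsSignedPerm n π) (hπ' : IsSignedPerm n π')
    (h : ∀ j : Fin n, π ((j : ℕ) + 1) = π' ((j : ℕ) + 1)) : π = π' := by
  ext i : 1
  by_cases hi : i ≠ 0 ∧ i.natAbs ≤ n
  · obtain ⟨b, j, rfl⟩ := exists_eq_signedVal hi.1 hi.2
    cases b
    · exact h j
    · simp only [signedVal, if_true, hπ.1, hπ'.1, h j]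
  · rcases not_and_or.mp hi with h0 | hgt
    · rw [not_not.mp h0, hπ.apply_zero, hπ'.apply_zero]
    · have : (n : ℤ) < |i| := by rw [Int.abs_eq_natAbs]; omega
      rw [hπ.2 i this, hπ'.2 i this]

end IsSignedPerm

lemma exists_toSigned_eq {π : Perm ℤ} (hπ : IsSignedPerm n π) :
    ∃ (ε : Fin n → Bool) (σ : Perm (Fin n)), toSigned ε σ = π := by
  have hmem (j : Fin n) : π ((j : ℕ) + 1) ≠ 0 ∧ (π ((j : ℕ) + 1)).natAbs ≤ n :=
    ⟨hπ.apply_ne_zero (by omega), hπ.natAbs_apply_le (by omega)⟩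
  let f (j : Fin n) : Bool × Fin n := signedPosEquiv.symm ⟨_, hmem j⟩
  have hf (j : Fin n) : signedVal (f j).1 (f j).2 = π ((j : ℕ) + 1) := by
    rw [← coe_signedPosEquiv, Equiv.apply_symm_apply]
  have hinj : Function.Injective fun j => (f j).2 := by
    intro a b (hab : (f a).2 = (f b).2)
    have habs : (π ((a : ℕ) + 1)).natAbs = (π ((b : ℕ) + 1)).natAbs := by
      rw [← hf a, ← hf b, natAbs_signedVal, natAbs_signedVal, hab]
    rcases Int.natAbs_eq_natAbs_iff.mp habs with h | h
    · exact Fin.ext (by have := π.injective h; omega)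
    · rw [← hπ.1] at h
      have := π.injective h
      omega
  let σ : Perm (Fin n) := Equiv.ofBijective _ (Finite.injective_iff_bijective.mp hinj)
  refine ⟨fun v => (f (σ.symm v)).1, σ, ?_⟩
  refine (toSigned_mem _ σ).eq_of_forall_natCast_succ hπ fun j => ?_
  rw [toSigned_natCast_succ, ← hf j]
  simp [σ]

end SignedPerm

def signedPermEquiv (n : ℕ) : (Fin n → Bool) × Perm (Fin n) ≃ Bgroup n :=
  Equiv.ofBijective (fun x => ⟨toSigned x.1 x.2, toSigned_mem x.1 x.2⟩)
    ⟨fun _ _ h => toSigned_injective (congrArg Subtype.val h), fun ⟨_, hπ⟩ => by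
      obtain ⟨ε, σ, h⟩ := exists_toSigned_eq hπ
      exact ⟨(ε, σ), Subtype.ext h⟩⟩

lemma cdesB_eq_cdes {n : ℕ} {π : Perm ℤ} (h0 : π 0 = 0) :
    cdesB n π = cdes fun i : Fin (n + 1) => π (i : ℕ) := by
  rw [cdesB, desB, desSetB, cdes, card_filter, card_filter, Fin.sum_univ_castSucc,
    ← Fin.sum_univ_eq_sum_range]
  congr 1
  · refine Fintype.sum_congr _ _ fun j => ?_
    simp only [Fin.coeSucc_eq_succ, Fin.val_succ, Fin.val_castSucc, Nat.cast_add, Nat.cast_one]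
  · simp [h0]

section RankPerm

variable {n : ℕ}

def valueSet (ε : Fin n → Bool) : Finset ℤ := insert 0 (univ.image fun v => signedVal (ε v) v)

lemma card_valueSet (ε : Fin n → Bool) : #(valueSet ε) = n + 1 := by
  have hinj : Function.Injective fun v => signedVal (ε v) v := fun v v' h =>
    congrArg Prod.snd (signedVal_injective (a₁ := (ε v, v)) (a₂ := (ε v', v')) h)
  rw [valueSet, card_insert_of_notMem, card_image_of_injective _ hinj, card_univ, Fintype.card_fin]
  simp only [mem_image, mem_univ, true_and, not_exists]
  intro v h
  simpa [h] using natAbs_signedVal (ε v) v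

lemma toSigned_mem_valueSet (ε : Fin n → Bool) (σ : Perm (Fin n)) (i : Fin (n + 1)) :
    toSigned ε σ (i : ℕ) ∈ valueSet ε := by
  induction i using Fin.cases with
  | zero => simp [valueSet, toSigned_zero]
  | succ j =>
    rw [Fin.val_succ, Nat.cast_succ, toSigned_natCast_succ]
    exact mem_insert_of_mem (mem_image_of_mem _ (mem_univ _))

/-- The standardization of the word `0, π(1), …, π(n)` of `π = toSigned ε σ`. -/
def rankPerm (ε : Fin n → Bool) (σ : Perm (Fin n)) : Perm (Fin (n + 1)) :=
  Equiv.ofBijective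
    (fun i => ((valueSet ε).orderIsoOfFin (card_valueSet ε)).symm
      ⟨_, toSigned_mem_valueSet ε σ i⟩)
    (Finite.injective_iff_bijective.mp fun i i' h => Fin.ext <| by
      simpa using (toSigned ε σ).injective (congrArg Subtype.val (OrderIso.injective _ h)))

lemma orderEmbOfFin_rankPerm (ε : Fin n → Bool) (σ : Perm (Fin n)) (i : Fin (n + 1)) :
    (valueSet ε).orderEmbOfFin (card_valueSet ε) (rankPerm ε σ i) =
      toSigned ε σ (i : ℕ) := by
  simp [rankPerm, ← coe_orderIsoOfFin_apply]

lemma cdes_rankPerm (ε : Fin n → Bool) (σ : Perm (Fin n)) :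
    cdes (rankPerm ε σ) = cdesB n (toSigned ε σ) := by
  rw [cdesB_eq_cdes (toSigned_zero ε σ),
    ← cdes_comp_strictMono ((valueSet ε).orderEmbOfFin (card_valueSet ε)).strictMono]
  simp only [Function.comp_def, orderEmbOfFin_rankPerm]

lemma rankPerm_apply_zero (ε : Fin n → Bool) (σ σ' : Perm (Fin n)) :
    rankPerm ε σ 0 = rankPerm ε σ' 0 :=
  ((valueSet ε).orderEmbOfFin (card_valueSet ε)).injective <| by
    simp only [orderEmbOfFin_rankPerm, Fin.val_zero, Nat.cast_zero, toSigned_zero]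

lemma rankPerm_injective (ε : Fin n → Bool) : Function.Injective (rankPerm ε) := by
  intro σ σ' h
  refine congrArg Prod.snd (toSigned_injective (a₁ := (ε, σ)) (a₂ := (ε, σ')) ?_)
  refine (toSigned_mem ε σ).eq_of_forall_natCast_succ (toSigned_mem ε σ') fun j => ?_
  have := orderEmbOfFin_rankPerm ε σ j.succ
  rw [h, orderEmbOfFin_rankPerm] at this
  simpa using this.symm

end RankPerm

section Assembly

variable {m : ℕ}

def linearizeRankEquiv (ε : Fin (m + 1) → Bool) : Perm (Fin (m + 1)) ≃ Perm (Fin (m + 1)) :=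
  Equiv.ofBijective (fun σ => linearize (rankPerm ε σ)) <|
    Finite.injective_iff_bijective.mp fun σ σ' h =>
      rankPerm_injective ε (eq_of_linearize_eq (rankPerm_apply_zero ε σ σ') h)

lemma cdesB_toSigned (ε : Fin (m + 1) → Bool) (σ : Perm (Fin (m + 1))) :
    cdesB (m + 1) (toSigned ε σ) = des (linearizeRankEquiv ε σ) + 1 := by
  rw [← cdes_rankPerm, cdes_eq_des_linearize_add_one]
  rfl

def cdesBEquiv (m : ℕ) : (Fin (m + 1) → Bool) × Perm (Fin (m + 1)) ≃ Bgroup (m + 1) :=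
  (Equiv.prodCongrRight fun ε => (linearizeRankEquiv ε).symm).trans (signedPermEquiv (m + 1))

lemma cdesB_cdesBEquiv (x : (Fin (m + 1) → Bool) × Perm (Fin (m + 1))) :
    cdesB (m + 1) (cdesBEquiv m x : Perm ℤ) = des x.2 + 1 := by
  rw [← Equiv.apply_symm_apply (linearizeRankEquiv x.1) x.2, ← cdesB_toSigned]
  rfl

end Assembly

theorem stmt14 (n : ℕ) (hn : 1 ≤ n) :
    (∀ i : ℕ, i ≤ n - 1 →
      Nat.card {π : ↥(Bgroup n) // cdesB n (π : Equiv.Perm ℤ) = i + 1} =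
        2 ^ n * Nat.card {π : Equiv.Perm (Fin n) // des π = i}) ∧
    (∑ᶠ π : ↥(Bgroup n), (Polynomial.X : Polynomial ℚ) ^ cdesB n (π : Equiv.Perm ℤ)) =
      2 ^ n * ∑ π : Equiv.Perm (Fin n), (Polynomial.X : Polynomial ℚ) ^ (des π + 1) := by
  obtain ⟨m, rfl⟩ := Nat.exists_eq_add_of_le' hn
  have he := cdesB_cdesBEquiv (m := m)
  constructor
  · intro i _
    calc Nat.card {π : Bgroup (m + 1) // cdesB (m + 1) π = i + 1}
        = Nat.card {x : (Fin (m + 1) → Bool) × Perm (Fin (m + 1)) // des x.2 = i} :=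
          Nat.card_congr ((cdesBEquiv m).subtypeEquiv fun x => by rw [he]; omega).symm
      _ = Nat.card ((Fin (m + 1) → Bool) × {τ : Perm (Fin (m + 1)) // des τ = i}) :=
          Nat.card_congr ⟨fun x => (x.1.1, ⟨x.1.2, x.2⟩), fun y => ⟨(y.1, y.2.1), y.2.2⟩,
            fun _ => rfl, fun _ => rfl⟩
      _ = 2 ^ (m + 1) * Nat.card {τ : Perm (Fin (m + 1)) // des τ = i} := by
          simp
  · rw [← finsum_comp_equiv (cdesBEquiv m), finsum_eq_sum_of_fintype]
    simp only [he, Fintype.sum_prod_type, sum_const, card_univ, Fintype.card_fun,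
      Fintype.card_bool, Fintype.card_fin, nsmul_eq_mul, Nat.cast_pow, Nat.cast_ofNat]
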